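/- Let Γ be a finite simplicial graph and 𝒢 = (G_v)_{v∈V} a family of nontrivial groups, and let X(Γ,𝒢) be the Cayley graph of Γ𝒢 with respect to the generating set ⋃_{v∈V} (Ĝ_v ∖ {1}), with graph distance d. For every subset Λ ⊆ V, the subgroup ⟨Λ⟩ is convex in X(Γ,𝒢): if x, y ∈ ⟨Λ⟩ and z ∈ Γ𝒢 satisfy d(x,z) + d(z,y) = d(x,y), then z ∈ ⟨Λ⟩. -/

import Mathlib

open scoped Pointwise

section GraphProductDefs

variable {V : Type} (Γ : SimpleGraph V) (G : V → Type) [∀ v, Group (G v)]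

/-- The set of commutation relators defining the graph product of the family `G` over `Γ`. -/
def graphProductRels : Set (Monoid.CoprodI G) :=
  { x | ∃ (u v : V) (g : G u) (h : G v), Γ.Adj u v ∧
      x = Monoid.CoprodI.of g * Monoid.CoprodI.of h *
        (Monoid.CoprodI.of g)⁻¹ * (Monoid.CoprodI.of h)⁻¹ }

/-- The graph product of the family `G` over the simplicial graph `Γ`. -/
abbrev GraphProduct : Type :=
  Monoid.CoprodI G ⧸ Subgroup.normalClosure (graphProductRels Γ G)

/-- The canonical map from a vertex group to the graph product. -/
def GraphProduct.of (v : V) : G v →* GraphProduct Γ G :=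
  (QuotientGroup.mk' (Subgroup.normalClosure (graphProductRels Γ G))).comp Monoid.CoprodI.of

/-- The image `Ĝ_v` of a vertex group in the graph product. -/
def vertexSubgroup (v : V) : Subgroup (GraphProduct Γ G) :=
  (GraphProduct.of Γ G v).range

/-- The subgroup `⟨Λ⟩` generated by the vertex groups with vertices in `Λ`. -/
def spanSubgroup (Λ : Set V) : Subgroup (GraphProduct Γ G) :=
  ⨆ v ∈ Λ, vertexSubgroup Γ G v

/-- The star of a vertex: the vertex together with its neighbours. -/
def starSet (u : V) : Set V := insert u {w | Γ.Adj u w}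

/-- `Λ` is a connected component of the subgraph of `Γ` induced on `S`: it is a nonempty
connected subset of `S` closed under adjacency within `S`. -/
def IsConnCompOf (S Λ : Set V) : Prop :=
  Λ.Nonempty ∧ Λ ⊆ S ∧ (Γ.induce Λ).Connected ∧
    ∀ a ∈ Λ, ∀ b ∈ S, Γ.Adj a b → b ∈ Λ

/-- A local automorphism: permutes the vertex subgroups according to a graph automorphism. -/
def IsLocalAut (φ : MulAut (GraphProduct Γ G)) : Prop :=
  ∃ σ : Γ ≃g Γ, ∀ v : V,
    Subgroup.map φ.toMonoidHom (vertexSubgroup Γ G v) = vertexSubgroup Γ G (σ v)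

/-- A partial conjugation: conjugates the vertex groups of a connected component `Λ` of the
graph induced on the complement of the star of `u` by an element `h ∈ Ĝ_u`, and fixes the
other vertex groups pointwise. -/
def IsPartialConj (φ : MulAut (GraphProduct Γ G)) : Prop :=
  ∃ (u : V) (Λ : Set V) (h : GraphProduct Γ G),
    h ∈ vertexSubgroup Γ G u ∧
    IsConnCompOf Γ {w | w ∉ starSet Γ u} Λ ∧
    (∀ w ∈ Λ, ∀ x ∈ vertexSubgroup Γ G w, φ x = h * x * h⁻¹) ∧
    (∀ w, w ∉ Λ → ∀ x ∈ vertexSubgroup Γ G w, φ x = x)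

/-- The subgroup of `Aut(Γ𝒢)` generated by local automorphisms and partial conjugations. -/
def ConjP : Subgroup (MulAut (GraphProduct Γ G)) :=
  Subgroup.closure {φ | IsLocalAut Γ G φ ∨ IsPartialConj Γ G φ}

/-- A conjugating automorphism: sends each vertex subgroup to a conjugate of a vertex
subgroup. -/
def IsConjugating (φ : MulAut (GraphProduct Γ G)) : Prop :=
  ∀ v : V, ∃ (w : V) (g : GraphProduct Γ G),
    Subgroup.map φ.toMonoidHom (vertexSubgroup Γ G v) =
      Subgroup.map (MulAut.conj g).toMonoidHom (vertexSubgroup Γ G w)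

end GraphProductDefs

section Extra

variable {V : Type} (Γ : SimpleGraph V) (G : V → Type) [∀ v, Group (G v)]

/-- The Cayley graph `X(Γ,𝒢)` of the graph product with respect to the union of the
(nontrivial elements of the) vertex subgroups. -/
def cayley : SimpleGraph (GraphProduct Γ G) where
  Adj x y := x ≠ y ∧ ∃ v : V, x⁻¹ * y ∈ vertexSubgroup Γ G v
  symm := ⟨by
    rintro x y ⟨hxy, v, hv⟩
    exact ⟨hxy.symm, v, by simpa using (vertexSubgroup Γ G v).inv_mem hv⟩⟩
  loopless := ⟨fun x h => h.1 rfl⟩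

/-- A molecular graph: finite, connected, minimal degree at least 2, girth at least 5. -/
def Molecular : Prop :=
  Γ.Connected ∧ (∀ v : V, 2 ≤ (Γ.neighborSet v).ncard) ∧ 5 ≤ Γ.girth

/-- An atomic graph: molecular, and the subgraph induced on the complement of each star is
nonempty and connected. -/
def Atomic : Prop :=
  Molecular Γ ∧ ∀ u : V, {w | w ∉ starSet Γ u}.Nonempty ∧
    (Γ.induce {w | w ∉ starSet Γ u}).Connected

/-- The link of a set of vertices: the vertices adjacent to every vertex of the set. -/
def linkSet (Λ : Set V) : Set V := {w | ∀ a ∈ Λ, Γ.Adj w a}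

/-- A subgroup decomposes non-trivially as a direct product. -/
def IsNontrivDirectProduct (H : Subgroup (GraphProduct Γ G)) : Prop :=
  ∃ (A B : Type) (_ : Group A) (_ : Group B),
    Nontrivial A ∧ Nontrivial B ∧ Nonempty (H ≃* A × B)

/-- `Γ` has a SIL: two distinct non-adjacent vertices `u`, `v` such that the graph induced on
the complement of `link(u) ∩ link(v)` has a connected component containing neither `u` nor
`v`. -/
def HasSIL : Prop :=
  ∃ u v : V, u ≠ v ∧ ¬ Γ.Adj u v ∧
    ∃ Λ : Set V, IsConnCompOf Γ {w | ¬ (Γ.Adj u w ∧ Γ.Adj v w)} Λ ∧ u ∉ Λ ∧ v ∉ Λ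

end Extra


/-!
The homomorphism `r : Γ𝒢 → ⟨Λ⟩` that is the identity on `Ĝ_v` for `v ∈ Λ` and trivial on
`Ĝ_v` for `v ∉ Λ` is a retraction onto `⟨Λ⟩` which does not increase distances in `X(Γ,𝒢)`:
an edge labelled in `Ĝ_v` is mapped to an edge when `v ∈ Λ` and collapsed to a point otherwise.
If `z ∉ ⟨Λ⟩`, a geodesic from `x` to `z` must use an edge labelled outside `⟨Λ⟩`, so its image
is strictly shorter. Following the images of geodesics `x → z → y` then gives a path from
`r x = x` to `r y = y` shorter than `d(x,z) + d(z,y) = d(x,y)`.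
-/

namespace GraphProduct

variable {V : Type} {Γ : SimpleGraph V} {G : V → Type} [∀ v, Group (G v)]

theorem of_commute {u v : V} (huv : Γ.Adj u v) (g : G u) (h : G v) :
    Commute (of Γ G u g) (of Γ G v h) := by
  have hrel : Monoid.CoprodI.of g * Monoid.CoprodI.of h * (Monoid.CoprodI.of g)⁻¹ *
      (Monoid.CoprodI.of h)⁻¹ ∈ Subgroup.normalClosure (graphProductRels Γ G) :=
    Subgroup.subset_normalClosure ⟨u, v, g, h, huv, rfl⟩
  rw [← QuotientGroup.eq_one_iff] at hrel
  simp only [QuotientGroup.mk_mul, QuotientGroup.mk_inv, mul_inv_eq_iff_eq_mul,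
    one_mul] at hrel
  exact hrel

def lift {H : Type*} [Group H] (f : ∀ v, G v →* H)
    (hf : ∀ u v, Γ.Adj u v → ∀ (g : G u) (h : G v), Commute (f u g) (f v h)) :
    GraphProduct Γ G →* H :=
  QuotientGroup.lift _ (Monoid.CoprodI.lift f) <| Subgroup.normalClosure_le_normal <| by
    rintro _ ⟨u, v, g, h, huv, rfl⟩
    simp [(hf u v huv g h).eq]

@[simp]
theorem lift_of {H : Type*} [Group H] (f : ∀ v, G v →* H)
    (hf : ∀ u v, Γ.Adj u v → ∀ (g : G u) (h : G v), Commute (f u g) (f v h))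
    (v : V) (g : G v) : lift f hf (of Γ G v g) = f v g :=
  Monoid.CoprodI.lift_of f g

end GraphProduct

section Retraction

variable {V : Type} (Γ : SimpleGraph V) (G : V → Type) [∀ v, Group (G v)]

open Classical in
noncomputable def spanRetraction (Λ : Set V) : GraphProduct Γ G →* GraphProduct Γ G :=
  GraphProduct.lift (fun v => if v ∈ Λ then GraphProduct.of Γ G v else 1) fun u v huv g h => by
    split_ifs
    exacts [GraphProduct.of_commute huv g h, Commute.one_right _, Commute.one_left _,
      Commute.one_left _]

variable {Γ G} {Λ : Set V}

theorem vertexSubgroup_le_spanSubgroup {v : V} (hv : v ∈ Λ) :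
    vertexSubgroup Γ G v ≤ spanSubgroup Γ G Λ :=
  le_iSup₂ (f := fun v (_ : v ∈ Λ) => vertexSubgroup Γ G v) v hv

theorem spanRetraction_of_mem_vertexSubgroup {v : V} (hv : v ∈ Λ) {a : GraphProduct Γ G}
    (ha : a ∈ vertexSubgroup Γ G v) : spanRetraction Γ G Λ a = a := by
  obtain ⟨g, rfl⟩ := ha
  simp [spanRetraction, hv]

theorem spanRetraction_eq_one_of_mem_vertexSubgroup {v : V} (hv : v ∉ Λ)
    {a : GraphProduct Γ G} (ha : a ∈ vertexSubgroup Γ G v) : spanRetraction Γ G Λ a = 1 := by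
  obtain ⟨g, rfl⟩ := ha
  simp [spanRetraction, hv]

theorem spanRetraction_of_mem_spanSubgroup {a : GraphProduct Γ G}
    (ha : a ∈ spanSubgroup Γ G Λ) : spanRetraction Γ G Λ a = a := by
  have hle : spanSubgroup Γ G Λ ≤ (spanRetraction Γ G Λ).eqLocus (.id _) :=
    iSup₂_le fun _ hv _ hb => spanRetraction_of_mem_vertexSubgroup hv hb
  exact hle ha

end Retraction

section CayleyGraph

variable {V : Type} {Γ : SimpleGraph V} {G : V → Type} [∀ v, Group (G v)]

theorem iSup_vertexSubgroup_eq_top : ⨆ v, vertexSubgroup Γ G v = ⊤ := by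
  have hlift : Monoid.CoprodI.lift (GraphProduct.of Γ G) = QuotientGroup.mk' _ :=
    Monoid.CoprodI.ext_hom _ _ fun v => by ext; simp [GraphProduct.of]
  simp only [vertexSubgroup, ← Monoid.CoprodI.range_eq_iSup, hlift, MonoidHom.range_eq_top]
  exact QuotientGroup.mk'_surjective _

theorem cayley_reachable_mul (a g : GraphProduct Γ G) : (cayley Γ G).Reachable a (a * g) := by
  have hg : g ∈ ⨆ v, vertexSubgroup Γ G v := by simp [iSup_vertexSubgroup_eq_top]
  refine Subgroup.iSup_induction _ (C := fun g => ∀ a, (cayley Γ G).Reachable a (a * g)) hg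
    (fun v g hg a => ?_) (fun a => by simp)
    (fun g h hg hh a => by simpa [mul_assoc] using (hg a).trans (hh (a * g))) a
  by_cases h : a = a * g
  · exact h ▸ .refl a
  · exact SimpleGraph.Adj.reachable ⟨h, v, by simpa using hg⟩

theorem cayley_connected : (cayley Γ G).Connected where
  preconnected a b := by simpa using cayley_reachable_mul a (a⁻¹ * b)

variable {Λ : Set V}

theorem cayley_adj_spanRetraction_or_eq {a b : GraphProduct Γ G} (hab : (cayley Γ G).Adj a b) :
    (a⁻¹ * b ∈ spanSubgroup Γ G Λ ∧
      (cayley Γ G).Adj (spanRetraction Γ G Λ a) (spanRetraction Γ G Λ b)) ∨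
    spanRetraction Γ G Λ a = spanRetraction Γ G Λ b := by
  obtain ⟨hne, v, hv⟩ := hab
  have hmul : spanRetraction Γ G Λ b =
      spanRetraction Γ G Λ a * spanRetraction Γ G Λ (a⁻¹ * b) := by
    rw [← map_mul, mul_inv_cancel_left]
  by_cases hvΛ : v ∈ Λ
  · rw [spanRetraction_of_mem_vertexSubgroup hvΛ hv] at hmul
    refine .inl ⟨vertexSubgroup_le_spanSubgroup hvΛ hv, ?_, v, ?_⟩
    · rwa [hmul, ne_eq, left_eq_mul, inv_mul_eq_one]
    · simpa [hmul] using hv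
  · rw [spanRetraction_eq_one_of_mem_vertexSubgroup hvΛ hv, mul_one] at hmul
    exact .inr hmul.symm

theorem exists_walk_spanRetraction_length_le {a b : GraphProduct Γ G}
    (p : (cayley Γ G).Walk a b) :
    ∃ q : (cayley Γ G).Walk (spanRetraction Γ G Λ a) (spanRetraction Γ G Λ b),
      q.length ≤ p.length := by
  induction p with
  | nil => exact ⟨.nil, le_rfl⟩
  | cons hac _ ih =>
    obtain ⟨q, hq⟩ := ih
    rcases cayley_adj_spanRetraction_or_eq (Λ := Λ) hac with ⟨-, hadj⟩ | heq
    · exact ⟨.cons hadj q, by simpa using hq⟩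
    · refine ⟨q.copy heq.symm rfl, ?_⟩
      simp only [SimpleGraph.Walk.length_copy, SimpleGraph.Walk.length_cons]
      omega

theorem exists_walk_spanRetraction_length_lt {a b : GraphProduct Γ G}
    (p : (cayley Γ G).Walk a b) (hab : a⁻¹ * b ∉ spanSubgroup Γ G Λ) :
    ∃ q : (cayley Γ G).Walk (spanRetraction Γ G Λ a) (spanRetraction Γ G Λ b),
      q.length < p.length := by
  induction p with
  | nil => simp at hab
  | @cons a c b hac p ih =>
    rcases cayley_adj_spanRetraction_or_eq (Λ := Λ) hac with ⟨hmem, hadj⟩ | heq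
    · have hcb : c⁻¹ * b ∉ spanSubgroup Γ G Λ := fun hcb =>
        hab (by simpa [mul_assoc] using mul_mem hmem hcb)
      obtain ⟨q, hq⟩ := ih hcb
      exact ⟨.cons hadj q, by simpa using hq⟩
    · obtain ⟨q, hq⟩ := exists_walk_spanRetraction_length_le (Λ := Λ) p
      refine ⟨q.copy heq.symm rfl, ?_⟩
      simp only [SimpleGraph.Walk.length_copy, SimpleGraph.Walk.length_cons]
      omega

end CayleyGraph

theorem spanSubgroup_convex_general {V : Type}
    (Γ : SimpleGraph V) (G : V → Type) [∀ v, Group (G v)]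
    (Λ : Set V) (x y z : GraphProduct Γ G)
    (hx : x ∈ spanSubgroup Γ G Λ) (hy : y ∈ spanSubgroup Γ G Λ)
    (hz : (cayley Γ G).dist x z + (cayley Γ G).dist z y = (cayley Γ G).dist x y) :
    z ∈ spanSubgroup Γ G Λ := by
  by_contra hzΛ
  have hxz : x⁻¹ * z ∉ spanSubgroup Γ G Λ := fun h => hzΛ (by simpa using mul_mem hx h)
  obtain ⟨p₁, hp₁⟩ := (cayley_connected.preconnected x z).exists_walk_length_eq_dist
  obtain ⟨p₂, hp₂⟩ := (cayley_connected.preconnected z y).exists_walk_length_eq_dist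
  obtain ⟨q₁, hq₁⟩ := exists_walk_spanRetraction_length_lt p₁ hxz
  obtain ⟨q₂, hq₂⟩ := exists_walk_spanRetraction_length_le (Λ := Λ) p₂
  let q := (q₁.append q₂).copy (spanRetraction_of_mem_spanSubgroup hx)
    (spanRetraction_of_mem_spanSubgroup hy)
  have hq : q.length < (cayley Γ G).dist x y := by
    simp only [q, SimpleGraph.Walk.length_copy, SimpleGraph.Walk.length_append]
    omega
  exact hq.not_ge (SimpleGraph.dist_le q)

/-- **Observation.** Parabolic subgroups `⟨Λ⟩` are convex in the Cayley graph `X(Γ,𝒢)`. -/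
theorem spanSubgroup_convex {V : Type} [Fintype V]
    (Γ : SimpleGraph V) (G : V → Type) [∀ v, Group (G v)] [∀ v, Nontrivial (G v)]
    (Λ : Set V) (x y z : GraphProduct Γ G)
    (hx : x ∈ spanSubgroup Γ G Λ) (hy : y ∈ spanSubgroup Γ G Λ)
    (hz : (cayley Γ G).dist x z + (cayley Γ G).dist z y = (cayley Γ G).dist x y) :
    z ∈ spanSubgroup Γ G Λ :=
  spanSubgroup_convex_general Γ G Λ x y z hx hy hz
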